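/- Let α ∈ ℂ be any root of φ(X) = X⁴ − 2X³ + 6X − 3, and let s₃ = (1 − √2·3^{1/4} − √3)/2 and s₄ = (1 + √2·3^{1/4} − √3)/2. Then there exists a number field M (a subfield of ℂ which is finite-dimensional over ℚ) containing s₃, s₄ and α, together with a ℚ-algebra automorphism σ of M satisfying σ(s₃) = s₄ and σ(α) = α. -/

import Mathlib

/-!
Put `τ = √2 · 3^(1/4)`, so that `τ² = 2√3`, `τ⁴ = 12` and `s₃, s₄ = (1 ∓ τ - √3) / 2`.
Let `K = ℚ(α, √3)`. If `τ ∉ K`, then `τ` has minimal polynomial `X² - 2√3` over `K`, so `K(τ)`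
has a `K`-automorphism `τ ↦ -τ`; it fixes `α` and exchanges `s₃` and `s₄`, and `M = K(τ)` works.

To see `τ ∉ K`, embed `K` into `ℚ₁₃`. Since `φ(X + 1)` is Eisenstein at `2`, `φ` is the minimal
polynomial of `α`; it has the simple root `6` modulo `13`, and `3 ≡ 4²` modulo `13`, so by Hensel's
lemma both `φ` and `X² - 3` have roots in `ℚ₁₃`. But `12` is not a fourth power modulo `13`, hence
not in `ℚ₁₃` either, whereas `τ⁴ = 12`.
-/

noncomputable def sThree : ℂ :=
  (1 - (Real.sqrt 2 : ℂ) * (((3 : ℝ) ^ ((1 : ℝ) / 4) : ℝ) : ℂ) - (Real.sqrt 3 : ℂ)) / 2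

noncomputable def sFour : ℂ :=
  (1 + (Real.sqrt 2 : ℂ) * (((3 : ℝ) ^ ((1 : ℝ) / 4) : ℝ) : ℂ) - (Real.sqrt 3 : ℂ)) / 2

open Polynomial IntermediateField

theorem Int.isCoprime_natCast_prime_iff {p : ℕ} [hp : Fact p.Prime] {m : ℤ} :
    IsCoprime m p ↔ ¬(p : ℤ) ∣ m := by
  rw [isCoprime_comm, (Nat.prime_iff_prime_int.mp hp.out).coprime_iff_not_dvd]

theorem PadicInt.exists_aeval_eq_zero {p : ℕ} [Fact p.Prime] {F : ℤ[X]} {a : ℤ}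
    (h : (p : ℤ) ∣ F.eval a) (h' : ¬(p : ℤ) ∣ F.derivative.eval a) :
    ∃ z : ℤ_[p], aeval z F = 0 := by
  have aeval_a (G : ℤ[X]) : aeval (a : ℤ_[p]) G = ((G.eval a : ℤ) : ℤ_[p]) := by
    simpa using aeval_algebraMap_apply_eq_algebraMap_eval (A := ℤ_[p]) a G
  have hunit : ‖aeval (a : ℤ_[p]) (derivative F)‖ = 1 := by
    rwa [aeval_a, norm_intCast_eq_one_iff, Int.isCoprime_natCast_prime_iff]
  obtain ⟨z, hz, -⟩ := hensels_lemma (F := F) (a := (a : ℤ_[p])) (by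
    rwa [hunit, one_pow, aeval_a, norm_int_lt_one_iff_dvd])
  exact ⟨z, hz⟩

theorem Padic.exists_aeval_eq_zero {p : ℕ} [Fact p.Prime] {F : ℤ[X]} {a : ℤ}
    (h : (p : ℤ) ∣ F.eval a) (h' : ¬(p : ℤ) ∣ F.derivative.eval a) :
    ∃ z : ℚ_[p], aeval z F = 0 := by
  obtain ⟨z, hz⟩ := PadicInt.exists_aeval_eq_zero h h'
  exact ⟨z, by rw [← PadicInt.algebraMap_apply, aeval_algebraMap_apply, hz, map_zero]⟩

theorem Padic.pow_ne_intCast {p : ℕ} [Fact p.Prime] {n : ℕ} {c : ℤ}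
    (h : ∀ b : ZMod p, b ^ n ≠ c) (x : ℚ_[p]) : x ^ n ≠ c := by
  intro hx
  rcases Nat.eq_zero_or_pos n with rfl | hn
  · obtain rfl : c = 1 := by exact_mod_cast (pow_zero x ▸ hx).symm
    simp at h
  have hc : ‖(c : ℚ_[p])‖ = 1 := by
    rw [Padic.norm_intCast_eq_one_iff, Int.isCoprime_natCast_prime_iff,
      ← ZMod.intCast_zmod_eq_zero_iff_dvd]
    exact fun h0 => h 0 (by rw [h0, zero_pow hn.ne'])
  have hx1 : ‖x‖ = 1 := by
    rwa [← pow_eq_one_iff_of_nonneg (norm_nonneg x) hn.ne', ← norm_pow, hx]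
  let w : ℤ_[p] := ⟨x, hx1.le⟩
  have hw : w ^ n = c := Subtype.ext (by simpa using hx)
  exact h (PadicInt.toZMod w) (by simpa using congrArg PadicInt.toZMod hw)

theorem IntermediateField.nonempty_algHom_adjoin_pair {F E K : Type*} [Field F] [Field E]
    [Field K] [Algebra F E] [Algebra F K] {x y : E} (hx : IsIntegral F x) (hy : IsIntegral F y)
    {z : K} (hz : aeval z (minpoly F x) = 0)
    (hsplit : ((minpoly F y).map (algebraMap F K)).Splits) : Nonempty (F⟮x, y⟯ →ₐ[F] K) := by
  let f : F⟮x⟯ →ₐ[F] K :=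
    (algHomAdjoinIntegralEquiv F hx).symm ⟨z, mem_aroots.mpr ⟨minpoly.ne_zero hx, hz⟩⟩
  obtain ⟨φ, -⟩ := exists_algHom_adjoin_of_splits' (S := {y}) f fun s hs => by
    obtain rfl : s = y := hs
    exact ⟨hy.tower_top, hy.minpoly_splits_tower_top' (by rwa [← f.comp_algebraMap] at hsplit)⟩
  exact ⟨φ.comp (equivOfEq (adjoin_simple_adjoin_simple F x y).symm).toAlgHom⟩

theorem IntermediateField.exists_algEquiv_adjoin_simple_gen_eq_neg {F L : Type*} [Field F]
    [Field L] [Algebra F L] {t : L} (ht : t ∉ (algebraMap F L).range)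
    (hsq : t ^ 2 ∈ (algebraMap F L).range) :
    ∃ σ : F⟮t⟯ ≃ₐ[F] F⟮t⟯, σ (AdjoinSimple.gen F t) = -AdjoinSimple.gen F t := by
  obtain ⟨c, hc⟩ := hsq
  have hmonic : (X ^ 2 - C c).Monic := monic_X_pow_sub_C c two_ne_zero
  have hroot : aeval t (X ^ 2 - C c) = 0 := by simp [hc]
  have hint : IsIntegral F t := ⟨_, hmonic, hroot⟩
  have hmin : minpoly F t = X ^ 2 - C c :=
    (eq_of_monic_of_dvd_of_natDegree_le (minpoly.monic hint) hmonic (minpoly.dvd F t hroot)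
      (by rw [natDegree_X_pow_sub_C]; exact (minpoly.two_le_natDegree_iff hint).mpr ht)).symm
  have hneg : aeval (-AdjoinSimple.gen F t) (minpoly F t) = 0 := by
    rw [hmin]
    apply Subtype.ext
    simp [hc]
  have := adjoin.finiteDimensional hint
  let f : F⟮t⟯ →ₐ[F] F⟮t⟯ :=
    (algHomAdjoinIntegralEquiv F hint).symm ⟨_, mem_aroots.mpr ⟨minpoly.ne_zero hint, hneg⟩⟩
  exact ⟨AlgEquiv.ofBijective f f.bijective, algHomAdjoinIntegralEquiv_symm_apply_gen F hint _⟩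

noncomputable def phi : ℤ[X] := X ^ 4 - 2 * X ^ 3 + 6 * X - 3

theorem aeval_phi {A : Type*} [CommRing A] (x : A) :
    aeval x phi = x ^ 4 - 2 * x ^ 3 + 6 * x - 3 := by
  simp [phi, map_ofNat]

theorem phi_monic : phi.Monic := by unfold phi; monicity!

theorem irreducible_phi_comp : Irreducible (phi.comp (X + 1)) := by
  have hphi : phi.comp (X + 1) = X ^ 4 + 2 * X ^ 3 + 4 * X + 2 := by simp [phi]; ring
  have hdeg : (X ^ 4 + 2 * X ^ 3 + 4 * X + 2 : ℤ[X]).natDegree = 4 := by compute_degree!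
  have hmonic : (X ^ 4 + 2 * X ^ 3 + 4 * X + 2 : ℤ[X]).Monic := by monicity!
  rw [hphi]
  refine IsEisensteinAt.irreducible (𝓟 := Ideal.span {2}) ⟨?_, @fun n hn => ?_, ?_⟩
    ((Ideal.span_singleton_prime two_ne_zero).mpr Int.prime_two) hmonic.isPrimitive (by omega)
  · simp [hmonic.leadingCoeff, Ideal.mem_span_singleton]
  · rw [hdeg] at hn
    interval_cases n <;> simp [coeff_X, Ideal.mem_span_singleton]
  · simp [Ideal.span_singleton_pow, Ideal.mem_span_singleton]

theorem irreducible_map_phi : Irreducible (phi.map (algebraMap ℤ ℚ)) := by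
  rw [← phi_monic.irreducible_iff_irreducible_map_fraction_map,
    ← MulEquiv.irreducible_iff (algEquivAevalXAddC (1 : ℤ)).toMulEquiv]
  simpa [algEquivAevalXAddC_apply, comp_eq_aeval] using irreducible_phi_comp

theorem minpoly_eq_phi {α : ℂ} (hα : aeval α phi = 0) :
    minpoly ℚ α = phi.map (algebraMap ℤ ℚ) :=
  (minpoly.eq_of_irreducible_of_monic irreducible_map_phi (by rwa [aeval_map_algebraMap])
    (phi_monic.map _)).symm

theorem isIntegral_of_aeval_phi {α : ℂ} (hα : aeval α phi = 0) : IsIntegral ℚ α :=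
  ⟨_, phi_monic.map (algebraMap ℤ ℚ), by rwa [← aeval_def, aeval_map_algebraMap]⟩

instance fact_prime_thirteen : Fact (Nat.Prime 13) := ⟨by norm_num⟩

theorem exists_padic_root_phi : ∃ z : ℚ_[13], aeval z phi = 0 :=
  Padic.exists_aeval_eq_zero (a := 6) (by simp [phi]) (by simp [phi])

theorem exists_padic_sqrt_three : ∃ s : ℚ_[13], s ^ 2 = 3 := by
  obtain ⟨s, hs⟩ :=
    Padic.exists_aeval_eq_zero (p := 13) (F := X ^ 2 - C 3) (a := 4) (by simp) (by simp)
  exact ⟨s, by simpa [sub_eq_zero, map_ofNat] using hs⟩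

noncomputable def fourthRootTwelve : ℂ :=
  (Real.sqrt 2 : ℂ) * (((3 : ℝ) ^ ((1 : ℝ) / 4) : ℝ) : ℂ)

theorem sThree_eq : sThree = (1 - fourthRootTwelve - √3) / 2 := rfl

theorem sFour_eq : sFour = (1 + fourthRootTwelve - √3) / 2 := rfl

theorem sqrt_three_sq : ((√3 : ℝ) : ℂ) ^ 2 = 3 := by
  rw [← Complex.ofReal_pow, Real.sq_sqrt (by norm_num)]
  norm_num

theorem aeval_sqrt_three : aeval ((√3 : ℝ) : ℂ) (X ^ 2 - C 3 : ℚ[X]) = 0 := by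
  simp [sqrt_three_sq]

theorem isIntegral_sqrt_three : IsIntegral ℚ ((√3 : ℝ) : ℂ) :=
  ⟨_, monic_X_pow_sub_C 3 two_ne_zero, aeval_sqrt_three⟩

theorem fourthRootTwelve_sq : fourthRootTwelve ^ 2 = 2 * √3 := by
  have h : ((3 : ℝ) ^ ((1 : ℝ) / 4)) ^ 2 = √3 := by
    rw [← Real.rpow_natCast, ← Real.rpow_mul (by norm_num), Real.sqrt_eq_rpow]
    norm_num
  rw [fourthRootTwelve, mul_pow, ← Complex.ofReal_pow, ← Complex.ofReal_pow, h,
    Real.sq_sqrt (by norm_num)]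
  push_cast
  ring

theorem fourthRootTwelve_pow_four : fourthRootTwelve ^ 4 = 12 := by
  rw [show 4 = 2 * 2 by rfl, pow_mul, fourthRootTwelve_sq, mul_pow, sqrt_three_sq]
  norm_num

theorem isIntegral_fourthRootTwelve : IsIntegral ℚ fourthRootTwelve :=
  ⟨X ^ 4 - C 12, monic_X_pow_sub_C _ four_ne_zero, by simp [fourthRootTwelve_pow_four]⟩

theorem nonempty_algHom_adjoin_padic {α : ℂ} (hα : aeval α phi = 0) :
    Nonempty (ℚ⟮α, ((√3 : ℝ) : ℂ)⟯ →ₐ[ℚ] ℚ_[13]) := by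
  obtain ⟨z, hz⟩ := exists_padic_root_phi
  obtain ⟨s, hs⟩ := exists_padic_sqrt_three
  have hz' : aeval z (minpoly ℚ α) = 0 := by rwa [minpoly_eq_phi hα, aeval_map_algebraMap]
  have hsplit : ((X ^ 2 - C 3 : ℚ[X]).map (algebraMap ℚ ℚ_[13])).Splits := by
    have : (X ^ 2 - C 3 : ℚ[X]).map (algebraMap ℚ ℚ_[13]) = (X - C s) * (X - C (-s)) := by
      rw [Polynomial.map_sub, Polynomial.map_pow, map_X, map_C, map_ofNat, ← hs, C_pow, C_neg]
      ring
    exact this ▸ (Splits.X_sub_C _).mul (Splits.X_sub_C _)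
  have hsplit' : ((minpoly ℚ ((√3 : ℝ) : ℂ)).map (algebraMap ℚ ℚ_[13])).Splits :=
    hsplit.of_dvd (Polynomial.map_ne_zero (X_pow_sub_C_ne_zero two_pos 3))
      (Polynomial.map_dvd _ (minpoly.dvd _ _ aeval_sqrt_three))
  exact nonempty_algHom_adjoin_pair (isIntegral_of_aeval_phi hα) isIntegral_sqrt_three hz' hsplit'

theorem fourthRootTwelve_notMem {α : ℂ} (hα : aeval α phi = 0) :
    fourthRootTwelve ∉ ℚ⟮α, ((√3 : ℝ) : ℂ)⟯ := by
  intro h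
  obtain ⟨f⟩ := nonempty_algHom_adjoin_padic hα
  have h4 : (⟨_, h⟩ : ℚ⟮α, ((√3 : ℝ) : ℂ)⟯) ^ 4 = 12 := Subtype.ext fourthRootTwelve_pow_four
  exact Padic.pow_ne_intCast (n := 4) (c := 12) (by decide) (f ⟨_, h⟩)
    (by rw [← map_pow, h4, map_ofNat]; norm_num)

theorem exists_algEquiv_sThree_eq_sFour (K : IntermediateField ℚ ℂ) (h3 : ((√3 : ℝ) : ℂ) ∈ K)
    (hτ : fourthRootTwelve ∉ K) :
    ∃ (σ : K⟮fourthRootTwelve⟯ ≃ₐ[K] K⟮fourthRootTwelve⟯) (hs3 : sThree ∈ K⟮fourthRootTwelve⟯)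
      (hs4 : sFour ∈ K⟮fourthRootTwelve⟯), σ ⟨sThree, hs3⟩ = ⟨sFour, hs4⟩ := by
  obtain ⟨σ, hσ⟩ := exists_algEquiv_adjoin_simple_gen_eq_neg (F := K) (t := fourthRootTwelve)
    (fun ⟨x, hx⟩ => hτ (hx ▸ x.2))
    ⟨⟨2 * √3, mul_mem (ofNat_mem K 2) h3⟩, by rw [fourthRootTwelve_sq]; rfl⟩
  let τ := AdjoinSimple.gen K fourthRootTwelve
  let r : K⟮fourthRootTwelve⟯ := algebraMap K _ ⟨√3, h3⟩
  have hs3 : (((1 - τ - r) / 2 : K⟮fourthRootTwelve⟯) : ℂ) = sThree := by rw [sThree_eq]; rfl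
  have hs4 : (((1 + τ - r) / 2 : K⟮fourthRootTwelve⟯) : ℂ) = sFour := by rw [sFour_eq]; rfl
  have hσ' : σ ((1 - τ - r) / 2) = (1 + τ - r) / 2 := by
    rw [map_div₀, map_sub, map_sub, map_one, hσ, σ.commutes, map_ofNat, sub_neg_eq_add]
  exact ⟨σ, hs3 ▸ SetLike.coe_mem _, hs4 ▸ SetLike.coe_mem _,
    (congrArg σ (Subtype.ext hs3.symm)).trans (hσ'.trans (Subtype.ext hs4))⟩

theorem stmt_13 (α : ℂ) (hα : α ^ 4 - 2 * α ^ 3 + 6 * α - 3 = 0) :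
    ∃ (M : IntermediateField ℚ ℂ) (_ : FiniteDimensional ℚ M)
      (hs3 : sThree ∈ M) (hs4 : sFour ∈ M) (hαM : α ∈ M)
      (σ : M ≃ₐ[ℚ] M),
      σ ⟨sThree, hs3⟩ = ⟨sFour, hs4⟩ ∧ σ ⟨α, hαM⟩ = ⟨α, hαM⟩ := by
  have hroot : aeval α phi = 0 := by rwa [aeval_phi]
  let K := ℚ⟮α, ((√3 : ℝ) : ℂ)⟯
  have hαK : α ∈ K := subset_adjoin _ _ (by simp)
  have h3K : ((√3 : ℝ) : ℂ) ∈ K := subset_adjoin _ _ (by simp)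
  obtain ⟨σ, hs3, hs4, hσ⟩ := exists_algEquiv_sThree_eq_sFour K h3K (fourthRootTwelve_notMem hroot)
  have : FiniteDimensional ℚ K := finiteDimensional_adjoin fun x hx => by
    rcases hx with rfl | rfl
    · exact isIntegral_of_aeval_phi hroot
    · exact isIntegral_sqrt_three
  have : FiniteDimensional K K⟮fourthRootTwelve⟯ :=
    adjoin.finiteDimensional isIntegral_fourthRootTwelve.tower_top
  exact ⟨K⟮fourthRootTwelve⟯.restrictScalars ℚ, FiniteDimensional.trans ℚ K K⟮fourthRootTwelve⟯,
    hs3, hs4, IntermediateField.algebraMap_mem K⟮fourthRootTwelve⟯ (⟨α, hαK⟩ : K), σ.restrictScalars ℚ, hσ,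
    σ.commutes ⟨α, hαK⟩⟩
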